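/- Let X and Y be nondegenerate regular A-correspondences, B a C*-algebra, and let (π,σ) and (π,ω) be representations of X and Y in B with the same *-homomorphism π on A. If both (π,σ) and (π,ω) are Cuntz–Pimsner covariant, then the product representation (π, σω) of X ⊗_A Y in B, defined on elementary tensors by (σω)(x ⊗ y) = σ(x)ω(y), is Cuntz–Pimsner covariant. Consequently the full subcategory 𝒢^B_c of covariantly represented A-correspondences is a monoidal subcategory of 𝒢^B. -/

import Mathlib

/- ############################################################
   Common framework: C*-correspondences, interior tensor products
   (characterized relationally), representations, Cuntz–Pimsner algebras,
   product systems over ℕ^k, generating systems, and the ℰ / ℛθ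
   constructions of the paper (characterized relationally).
   ############################################################ -/

noncomputable section

open Filter Topology

universe u

/-- A C*-correspondence over a (not necessarily unital) C*-algebra `A`:
a right Hilbert `A`-module `X` together with a left action of `A` by
adjointable (bounded) operators.  The rank-one operators `θ_{x,y}` are
bundled as data together with their defining property. -/
structure Corr (A : Type u) [NonUnitalCStarAlgebra A] : Type (u + 1) where
  X : Type u
  [nacg : NormedAddCommGroup X]
  [nsp : NormedSpace ℂ X]
  [cmpl : CompleteSpace X]
  /-- right action of `A` -/
  ract : X → A → X
  /-- `A`-valued inner product -/
  inner : X → X → A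
  /-- left action `φ : A → L(X)` by adjointable operators -/
  lactL : A → X →L[ℂ] X
  /-- the rank-one ("compact") operators `θ_{x,y} z = x ⬝ ⟨y, z⟩` -/
  rankOne : X → X → X →L[ℂ] X
  ract_add_left : ∀ x y a, ract (x + y) a = ract x a + ract y a
  ract_add_right : ∀ x a b, ract x (a + b) = ract x a + ract x b
  ract_mul : ∀ x a b, ract x (a * b) = ract (ract x a) b
  ract_smul : ∀ (c : ℂ) x a, ract (c • x) a = c • ract x a
  ract_smul' : ∀ (c : ℂ) x a, ract x (c • a) = c • ract x a
  inner_add_right : ∀ x y z, inner x (y + z) = inner x y + inner x z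
  inner_smul_right : ∀ (c : ℂ) x y, inner x (c • y) = c • inner x y
  inner_star : ∀ x y, star (inner x y) = inner y x
  inner_ract_right : ∀ x y a, inner x (ract y a) = inner x y * a
  norm_eq : ∀ x, ‖x‖ ^ 2 = ‖inner x x‖
  lact_add : ∀ a b, lactL (a + b) = lactL a + lactL b
  lact_mul : ∀ a b, lactL (a * b) = (lactL a).comp (lactL b)
  lact_smul : ∀ (c : ℂ) a, lactL (c • a) = c • lactL a
  lact_adjoint : ∀ a x y, inner (lactL a x) y = inner x (lactL (star a) y)
  rankOne_apply : ∀ x y z, rankOne x y z = ract x (inner y z)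

attribute [instance] Corr.nacg Corr.nsp Corr.cmpl

variable {A : Type u} [NonUnitalCStarAlgebra A]

/-- Nondegeneracy: `A·X` is (topologically) all of `X`. -/
def Corr.Nondeg (W : Corr A) : Prop :=
  closure (Submodule.span ℂ {y : W.X | ∃ a x, y = W.lactL a x} : Set W.X) = Set.univ

/-- Regularity: the left action is injective and takes values in the
compact operators (the closed span of the rank-one operators). -/
def Corr.Regular (W : Corr A) : Prop :=
  (∀ a, W.lactL a = 0 → a = 0) ∧
    ∀ a, W.lactL a ∈
      closure (Submodule.span ℂ {T : W.X →L[ℂ] W.X | ∃ x y, T = W.rankOne x y} :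
        Set (W.X →L[ℂ] W.X))

/-- standing hypotheses of the paper: nondegenerate and regular -/
def Corr.Reg (W : Corr A) : Prop := W.Nondeg ∧ W.Regular

/-- a bare function which is a continuous `ℂ`-linear map -/
structure IsCLMap {E F : Type u} [NormedAddCommGroup E] [NormedSpace ℂ E]
    [NormedAddCommGroup F] [NormedSpace ℂ F] (f : E → F) : Prop where
  map_add : ∀ x y, f (x + y) = f x + f y
  map_smul : ∀ (c : ℂ) x, f (c • x) = c • f x
  cont : Continuous f

/-- a map of correspondences over the same algebra which is an isomorphism -/
structure IsCorrIsoFun (W Z : Corr A) (f : W.X → Z.X) : Prop where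
  bijective : Function.Bijective f
  map_add : ∀ x y, f (x + y) = f x + f y
  map_smul : ∀ (c : ℂ) x, f (c • x) = c • f x
  map_inner : ∀ x y, Z.inner (f x) (f y) = W.inner x y
  map_ract : ∀ x a, f (W.ract x a) = Z.ract (f x) a
  map_lact : ∀ a x, f (W.lactL a x) = Z.lactL a (f x)

/-- an isomorphism of correspondences over the same algebra (bundled) -/
structure CorrIso (W Z : Corr A) : Type u where
  toFun : W.X → Z.X
  invFun : Z.X → W.X
  left_inv : ∀ x, invFun (toFun x) = x
  right_inv : ∀ y, toFun (invFun y) = y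
  map_add : ∀ x y, toFun (x + y) = toFun x + toFun y
  map_smul : ∀ (c : ℂ) x, toFun (c • x) = c • toFun x
  map_inner : ∀ x y, Z.inner (toFun x) (toFun y) = W.inner x y
  map_ract : ∀ x a, toFun (W.ract x a) = Z.ract (toFun x) a
  map_lact : ∀ a x, toFun (W.lactL a x) = Z.lactL a (toFun x)

/-- an isomorphism of correspondences lying over an isomorphism `Φ` of the
coefficient algebras -/
structure CorrIsoOver {B : Type u} [NonUnitalCStarAlgebra B]
    (Φ : A → B) (W : Corr A) (Z : Corr B) : Type u where
  toFun : W.X → Z.X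
  bijective : Function.Bijective toFun
  map_add : ∀ x y, toFun (x + y) = toFun x + toFun y
  map_smul : ∀ (c : ℂ) x, toFun (c • x) = c • toFun x
  map_inner : ∀ x y, Z.inner (toFun x) (toFun y) = Φ (W.inner x y)
  map_ract : ∀ x a, toFun (W.ract x a) = Z.ract (toFun x) (Φ a)
  map_lact : ∀ a x, toFun (W.lactL a x) = Z.lactL (Φ a) (toFun x)

/-- `T`, together with the bilinear map `m`, is a realization of the
balanced (interior) tensor product `W ⊗_A V` of correspondences over `A`. -/
structure IsTensor (W V T : Corr A) (m : W.X → V.X → T.X) : Prop where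
  add_left : ∀ x x' y, m (x + x') y = m x y + m x' y
  add_right : ∀ x y y', m x (y + y') = m x y + m x y'
  smul_left : ∀ (c : ℂ) x y, m (c • x) y = c • m x y
  smul_right : ∀ (c : ℂ) x y, m x (c • y) = c • m x y
  balanced : ∀ x a y, m (W.ract x a) y = m x (V.lactL a y)
  inner : ∀ x y x' y',
    T.inner (m x y) (m x' y') = V.inner y (V.lactL (W.inner x x') y')
  ract : ∀ x y a, T.ract (m x y) a = m x (V.ract y a)
  lact : ∀ a x y, T.lactL a (m x y) = m (W.lactL a x) y
  dense : closure (Submodule.span ℂ {z : T.X | ∃ x y, z = m x y} : Set T.X) = Set.univ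

variable {B : Type u} [NonUnitalCStarAlgebra B]

/-- `π : A → B` is a *-homomorphism (stated elementwise) -/
structure IsStarHom (π : A → B) : Prop where
  map_add : ∀ a b, π (a + b) = π a + π b
  map_mul : ∀ a b, π (a * b) = π a * π b
  map_star : ∀ a, π (star a) = star (π a)
  map_smul : ∀ (c : ℂ) a, π (c • a) = c • π a

/-- `(π, t)` is a representation (Toeplitz representation) of the
correspondence `W` in the C*-algebra `B`. -/
structure IsRep (W : Corr A) (π : A → B) (t : W.X → B) : Prop where
  hom : IsStarHom π
  t_add : ∀ x y, t (x + y) = t x + t y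
  t_smul : ∀ (c : ℂ) x, t (c • x) = c • t x
  lact : ∀ a x, t (W.lactL a x) = π a * t x
  ract : ∀ x a, t (W.ract x a) = t x * π a
  inner : ∀ x y, star (t x) * t y = π (W.inner x y)

/-- Cuntz–Pimsner covariance of a representation of a *regular*
correspondence: whenever `φ(a)` is approximated in norm by finite sums of
rank-one operators `θ_{x,y}`, `π(a)` is approximated by the corresponding
sums `t(x) t(y)*`.  (For regular correspondences this is equivalent to
`π = t⁽¹⁾ ∘ φ`.) -/
def CPCov (W : Corr A) (π : A → B) (t : W.X → B) : Prop :=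
  ∀ (a : A) (N : ℕ → ℕ) (x y : ∀ n, Fin (N n) → W.X),
    Tendsto (fun n => ∑ r, W.rankOne (x n r) (y n r)) atTop (𝓝 (W.lactL a)) →
    Tendsto (fun n => ∑ r, t (x n r) * star (t (y n r))) atTop (𝓝 (π a))

/-- The Cuntz–Pimsner algebra of a correspondence `W`: a C*-algebra `O`
together with a universal covariant representation `(π, t)`:  `(π,t)` is
covariant, `π` is injective, `O` is generated by the images of `π` and `t`,
and every covariant representation factors uniquely through `O`. -/
structure CPAlg (W : Corr A) : Type (u + 1) where
  O : Type u
  [alg : NonUnitalCStarAlgebra O]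
  π : A → O
  t : W.X → O
  isRep : IsRep W π t
  covariant : CPCov W π t
  inj : Function.Injective π
  gen : ∀ S : Set O, IsClosed S →
    (∀ a, π a ∈ S) → (∀ x, t x ∈ S) →
    (∀ p q, p ∈ S → q ∈ S → p + q ∈ S) →
    (∀ p q, p ∈ S → q ∈ S → p * q ∈ S) →
    (∀ (c : ℂ) p, p ∈ S → c • p ∈ S) →
    (∀ p, p ∈ S → star p ∈ S) → ∀ z, z ∈ S
  universal : ∀ (C : Type u) [NonUnitalCStarAlgebra C],
    ∀ (π' : A → C) (t' : W.X → C), IsRep W π' t' → CPCov W π' t' →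
      ∃! h : O →⋆ₙₐ[ℂ] C, (∀ a, h (π a) = π' a) ∧ ∀ x, h (t x) = t' x

attribute [instance] CPAlg.alg

/- ##################  product systems over ℕ^k  ################## -/

/-- the `i`-th standard generator of `ℕ^k` -/
def egen {k : ℕ} (i : Fin k) : Fin k → ℕ := Pi.single i 1

/-- A product system over `ℕ^k` of (nondegenerate regular) correspondences
over `A`:  fibers `fib s`, an associative multiplication implementing
isomorphisms `fib s ⊗_A fib t ≅ fib (s+t)`, and `fib 0 = A` (witnessed by
the unit map). -/
structure PSys (A : Type u) [NonUnitalCStarAlgebra A] (k : ℕ) : Type (u + 1) where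
  fib : (Fin k → ℕ) → Corr A
  reg : ∀ s, (fib s).Reg
  mul : ∀ s t, (fib s).X → (fib t).X → (fib (s + t)).X
  isTensor : ∀ s t, IsTensor (fib s) (fib t) (fib (s + t)) (mul s t)
  assoc : ∀ s t u x y z,
    HEq (mul (s + t) u (mul s t x y) z) (mul s (t + u) x (mul t u y z))
  unit : A → (fib 0).X
  unit_bij : Function.Bijective unit
  unit_add : ∀ a b, unit (a + b) = unit a + unit b
  unit_smul : ∀ (c : ℂ) a, unit (c • a) = c • unit a
  unit_inner : ∀ a b, (fib 0).inner (unit a) (unit b) = star a * b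
  unit_lact : ∀ a b, (fib 0).lactL a (unit b) = unit (a * b)
  unit_ract : ∀ a b, (fib 0).ract (unit a) b = unit (a * b)
  unit_mul_left : ∀ s a x, HEq (mul 0 s (unit a) x) ((fib s).lactL a x)
  unit_mul_right : ∀ s x a, HEq (mul s 0 x (unit a)) ((fib s).ract x a)

/-- a representation of a product system in a C*-algebra `B` -/
structure PSRep {k : ℕ} (Xs : PSys A k) (B : Type u) [NonUnitalCStarAlgebra B] :
    Type u where
  π : A → B
  ψ : ∀ s, (Xs.fib s).X → B
  isRep : ∀ s, IsRep (Xs.fib s) π (ψ s)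
  ψ_zero : ∀ a, ψ 0 (Xs.unit a) = π a
  mul : ∀ s t x y, ψ s x * ψ t y = ψ (s + t) (Xs.mul s t x y)

/-- Cuntz–Pimsner covariance of a representation of a product system -/
def PSCPCov {k : ℕ} {Xs : PSys A k} {B : Type u} [NonUnitalCStarAlgebra B]
    (r : PSRep Xs B) : Prop :=
  ∀ s, CPCov (Xs.fib s) r.π (r.ψ s)

/-- The Cuntz–Pimsner algebra `𝒪(X)` of a product system. -/
structure PSCPAlg {k : ℕ} (Xs : PSys A k) : Type (u + 1) where
  O : Type u
  [alg : NonUnitalCStarAlgebra O]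
  rep : PSRep Xs O
  covariant : PSCPCov rep
  inj : Function.Injective rep.π
  gen : ∀ S : Set O, IsClosed S →
    (∀ a, rep.π a ∈ S) → (∀ s x, rep.ψ s x ∈ S) →
    (∀ p q, p ∈ S → q ∈ S → p + q ∈ S) →
    (∀ p q, p ∈ S → q ∈ S → p * q ∈ S) →
    (∀ (c : ℂ) p, p ∈ S → c • p ∈ S) →
    (∀ p, p ∈ S → star p ∈ S) → ∀ z, z ∈ S
  universal : ∀ (C : Type u) [NonUnitalCStarAlgebra C],
    ∀ r : PSRep Xs C, PSCPCov r →
      ∃! h : O →⋆ₙₐ[ℂ] C,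
        (∀ a, h (rep.π a) = r.π a) ∧ ∀ s x, h (rep.ψ s x) = r.ψ s x

attribute [instance] PSCPAlg.alg

/- ##################  generating systems  ################## -/

/-- a realization of a triple tensor product `W1 ⊗ W2 ⊗ W3` carrying both
a left pairing `(W1 ⊗ W2) ⊗ W3` and a right pairing `W1 ⊗ (W2 ⊗ W3)` -/
structure Trip (W1 W2 W3 : Corr A) (T12 : Corr A) (m12 : W1.X → W2.X → T12.X)
    (T23 : Corr A) (m23 : W2.X → W3.X → T23.X) (P : Corr A) : Type u where
  lp : T12.X → W3.X → P.X
  rp : W1.X → T23.X → P.X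
  lt : IsTensor T12 W3 P lp
  rt : IsTensor W1 T23 P rp
  compat : ∀ x y z, lp (m12 x y) z = rp x (m23 y z)

/-- the hexagonal relation for a triple of flip isomorphisms
`θij, θil, θjl`, stated relative to arbitrary realizations of the six
triple tensor products. -/
def HexProp (Yi Yj Yl : Corr A)
    (Tij Tji Til Tli Tjl Tlj : Corr A)
    (mij : Yi.X → Yj.X → Tij.X) (mji : Yj.X → Yi.X → Tji.X)
    (mil : Yi.X → Yl.X → Til.X) (mli : Yl.X → Yi.X → Tli.X)
    (mjl : Yj.X → Yl.X → Tjl.X) (mlj : Yl.X → Yj.X → Tlj.X)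
    (θij : Tij.X → Tji.X) (θil : Til.X → Tli.X) (θjl : Tjl.X → Tlj.X) : Prop :=
  ∀ (P1 P2 P3 P4 P5 P6 : Corr A)
    (R1 : Trip Yi Yj Yl Tij mij Tjl mjl P1)
    (R2 : Trip Yj Yi Yl Tji mji Til mil P2)
    (R3 : Trip Yj Yl Yi Tjl mjl Tli mli P3)
    (R4 : Trip Yl Yj Yi Tlj mlj Tji mji P4)
    (R5 : Trip Yi Yl Yj Til mil Tlj mlj P5)
    (R6 : Trip Yl Yi Yj Tli mli Tij mij P6)
    (F1 : P1.X → P2.X) (F2 : P2.X → P3.X) (F3 : P3.X → P4.X)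
    (F4 : P1.X → P5.X) (F5 : P5.X → P6.X) (F6 : P6.X → P4.X),
    IsCLMap F1 → IsCLMap F2 → IsCLMap F3 →
    IsCLMap F4 → IsCLMap F5 → IsCLMap F6 →
    (∀ u z, F1 (R1.lp u z) = R2.lp (θij u) z) →
    (∀ y v, F2 (R2.rp y v) = R3.rp y (θil v)) →
    (∀ u z, F3 (R3.lp u z) = R4.lp (θjl u) z) →
    (∀ x v, F4 (R1.rp x v) = R5.rp x (θjl v)) →
    (∀ u z, F5 (R5.lp u z) = R6.lp (θil u) z) →
    (∀ x v, F6 (R6.rp x v) = R4.rp x (θij v)) →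
    ∀ w, F3 (F2 (F1 w)) = F6 (F5 (F4 w))

/-- A generating system `(Y, θ)` of `k` correspondences over `A`:
correspondences `Y i`, chosen realizations `T i j` of the tensor products
`Y i ⊗_A Y j`, and flip isomorphisms `θ i j : Y i ⊗ Y j → Y j ⊗ Y i` with
`θ i i = id`, `θ j i = (θ i j)⁻¹`, satisfying the hexagonal relations. -/
structure GenSys (A : Type u) [NonUnitalCStarAlgebra A] (k : ℕ) : Type (u + 1) where
  Y : Fin k → Corr A
  reg : ∀ i, (Y i).Reg
  T : Fin k → Fin k → Corr A
  tmul : ∀ i j, (Y i).X → (Y j).X → (T i j).X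
  isTensor : ∀ i j, IsTensor (Y i) (Y j) (T i j) (tmul i j)
  θ : ∀ i j, CorrIso (T i j) (T j i)
  θ_diag : ∀ i x y, (θ i i).toFun (tmul i i x y) = tmul i i x y
  θ_symm : ∀ i j z, (θ j i).toFun ((θ i j).toFun z) = z
  hex : ∀ i j l, HexProp (Y i) (Y j) (Y l) (T i j) (T j i) (T i l) (T l i)
    (T j l) (T l j) (tmul i j) (tmul j i) (tmul i l) (tmul l i) (tmul j l)
    (tmul l j) ((θ i j).toFun) ((θ i l).toFun) ((θ j l).toFun)

/-- the generating system obtained by keeping only `Y 1, …, Y m` -/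
def GenSys.restrict {k : ℕ} (G : GenSys A k) (m : ℕ) (h : m ≤ k) : GenSys A m where
  Y i := G.Y (Fin.castLE h i)
  reg i := G.reg _
  T i j := G.T (Fin.castLE h i) (Fin.castLE h j)
  tmul i j := G.tmul _ _
  isTensor i j := G.isTensor _ _
  θ i j := G.θ _ _
  θ_diag i := G.θ_diag _
  θ_symm i j := G.θ_symm _ _
  hex i j l := G.hex _ _ _

/-- `X` is *the* product system (over `ℕ^k`) generated by the generating
system `G` (Fowler–Sims); witnessed by compatible isomorphisms on the
generating fibers. -/
structure Generates {k : ℕ} (G : GenSys A k) (Xs : PSys A k) : Type u where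
  ι : ∀ i, CorrIso (G.Y i) (Xs.fib (egen i))
  κ : ∀ i j, CorrIso (G.T i j) (Xs.fib (egen i + egen j))
  κ_mul : ∀ i j x y,
    (κ i j).toFun (G.tmul i j x y) =
      Xs.mul (egen i) (egen j) ((ι i).toFun x) ((ι j).toFun y)
  θ_compat : ∀ i j z,
    HEq ((κ j i).toFun ((G.θ i j).toFun z)) ((κ i j).toFun z)

/- ############  mixed tensor products `W ⊗_A O` and `W ⊗_A V`  ############ -/

/-- `Z` (a correspondence over the C*-algebra `O`), with map `m`, is a
realization of the right Hilbert `O`-module `W ⊗_A O`, where `O` is an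
`A`-algebra via `πA`.  (No condition on the left action of `O` on `Z`.) -/
structure MixedMod (W : Corr A) (O : Type u) [NonUnitalCStarAlgebra O]
    (πA : A → O) (Z : Corr O) (m : W.X → O → Z.X) : Prop where
  add_left : ∀ x x' S, m (x + x') S = m x S + m x' S
  add_right : ∀ x S S', m x (S + S') = m x S + m x S'
  smul_left : ∀ (c : ℂ) x S, m (c • x) S = c • m x S
  smul_right : ∀ (c : ℂ) x S, m x (c • S) = c • m x S
  balanced : ∀ x a S, m (W.ract x a) S = m x (πA a * S)
  ract : ∀ x S T, Z.ract (m x S) T = m x (S * T)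
  inner : ∀ x S y T, Z.inner (m x S) (m y T) = star S * (πA (W.inner x y) * T)
  dense : closure (Submodule.span ℂ {z : Z.X | ∃ x S, z = m x S} : Set Z.X) = Set.univ

/-- `P`, with pairing `p`, is a realization of the balanced tensor product
`W ⊗_A V` where `W` is a correspondence over `A` and `V` a correspondence
over the `A`-algebra `O` (via `πA`); the left `A`-action is `πA`-compatible. -/
structure MixedPair (W : Corr A) {O : Type u} [NonUnitalCStarAlgebra O]
    (πA : A → O) (V P : Corr O) (p : W.X → V.X → P.X) : Prop where
  add_left : ∀ x x' v, p (x + x') v = p x v + p x' v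
  add_right : ∀ x v v', p x (v + v') = p x v + p x v'
  smul_left : ∀ (c : ℂ) x v, p (c • x) v = c • p x v
  smul_right : ∀ (c : ℂ) x v, p x (c • v) = c • p x v
  balanced : ∀ x a v, p (W.ract x a) v = p x (V.lactL (πA a) v)
  inner : ∀ x v x' v',
    P.inner (p x v) (p x' v') = V.inner v (V.lactL (πA (W.inner x x')) v')
  ract : ∀ x v S, P.ract (p x v) S = p x (V.ract v S)
  lact_pi : ∀ a x v, P.lactL (πA a) (p x v) = p (W.lactL a x) v
  dense : closure (Submodule.span ℂ {z : P.X | ∃ x v, z = p x v} : Set P.X) = Set.univ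

/- ############  the correspondence `ℰYᵢ = Yᵢ ⊗_A 𝒪(Y₁)`  ############ -/

/-- `Z = Yi ⊗_A 𝒪(Y1)` with the left `𝒪(Y1)`-action determined by the flip
`θ : Y1 ⊗ Yi → Yi ⊗ Y1` (`T` and `T'` are realizations of these tensor
products):  `π(a)` acts by `φ(a) ⊗ 1`, and `t(x)·(y ⊗ S) = (1 ⊗ V)(θ ⊗ 1)
(x ⊗ y ⊗ S)`. -/
structure ECorrData (Y1 Yi : Corr A)
    (T : Corr A) (mT : Y1.X → Yi.X → T.X)
    (T' : Corr A) (mT' : Yi.X → Y1.X → T'.X)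
    (θ : T.X → T'.X)
    (C : CPAlg Y1) (Z : Corr C.O) (m : Yi.X → C.O → Z.X) : Prop where
  mod : MixedMod Yi C.O C.π Z m
  lact_pi : ∀ a y S, Z.lactL (C.π a) (m y S) = m (Yi.lactL a y) S
  lact_t : ∃ μ : T'.X → C.O → Z.X,
    (∀ S, IsCLMap fun u => μ u S) ∧
    (∀ y u S, μ (mT' y u) S = m y (C.t u * S)) ∧
    ∀ x y S, Z.lactL (C.t x) (m y S) = μ (θ (mT x y)) S

/-- `Z = Yi ⊗_A 𝒪(Y p)` for a generating system `G`, with left action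
determined by `θ p i` -/
def ECorr {k : ℕ} (G : GenSys A k) (p i : Fin k) (C : CPAlg (G.Y p))
    (Z : Corr C.O) (m : (G.Y i).X → C.O → Z.X) : Prop :=
  ECorrData (G.Y p) (G.Y i) (G.T p i) (G.tmul p i) (G.T i p) (G.tmul i p)
    ((G.θ p i).toFun) C Z m

/-- `Z = Y j ⊗_A 𝒪(Y 1 ∗ ⋯ ∗ Y m)` with the left action of the
Cuntz–Pimsner algebra of the product system determined on the generators
`σ i = ψ_{e i}` via the flips `θ i j` and the absorption maps. -/
structure EPCorr {k : ℕ} (G : GenSys A k) {m : ℕ} (hm : m ≤ k)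
    (Xs : PSys A m) (gen : Generates (G.restrict m hm) Xs) (C : PSCPAlg Xs)
    (j : Fin k) (Z : Corr C.O) (mm : (G.Y j).X → C.O → Z.X) : Prop where
  mod : MixedMod (G.Y j) C.O C.rep.π Z mm
  lact_pi : ∀ a y S, Z.lactL (C.rep.π a) (mm y S) = mm ((G.Y j).lactL a y) S
  lact_t : ∀ i : Fin m,
    ∃ μ : (G.T j (Fin.castLE hm i)).X → C.O → Z.X,
      (∀ S, IsCLMap fun u => μ u S) ∧
      (∀ y u S, μ (G.tmul j (Fin.castLE hm i) y u) S =
        mm y (C.rep.ψ (egen i) ((gen.ι i).toFun u) * S)) ∧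
      ∀ x y S, Z.lactL (C.rep.ψ (egen i) ((gen.ι i).toFun x)) (mm y S) =
        μ ((G.θ (Fin.castLE hm i) j).toFun (G.tmul (Fin.castLE hm i) j x y)) S

/- ############  the isomorphism `ℛθ = ν⁻¹ (θ ⊗ 1) ν`  ############ -/

/-- Witness data expressing that `R : Zi ⊗_O Zj → Zj ⊗_O Zi` is the map
`ℛθ_{ij} = ν_{ji}⁻¹ (θ_{ij} ⊗ 1_O) ν_{ij}` of the paper, where
`Zi = Yi ⊗_A O`, `O = 𝒪(Y1)`, and `ν_{ij} : (Yi ⊗ O) ⊗_O (Yj ⊗ O) ≅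
Yi ⊗ Yj ⊗ O` is the canonical absorption isomorphism. -/
structure RTheta (O : Type u) [NonUnitalCStarAlgebra O] (πA : A → O)
    (Yi Yj : Corr A) (Tij Tji : Corr A)
    (mij : Yi.X → Yj.X → Tij.X) (mji : Yj.X → Yi.X → Tji.X)
    (θij : Tij.X → Tji.X)
    (Zi Zj : Corr O) (mmi : Yi.X → O → Zi.X) (mmj : Yj.X → O → Zj.X)
    (TZ TZr : Corr O) (mZ : Zi.X → Zj.X → TZ.X) (mZr : Zj.X → Zi.X → TZr.X)
    (R : TZ.X → TZr.X) : Type (u + 1) where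
  Pl : Corr O
  Pr : Corr O
  pij : Yi.X → Zj.X → Pl.X
  pji : Yj.X → Zi.X → Pr.X
  hp : MixedPair Yi πA Zj Pl pij
  hpr : MixedPair Yj πA Zi Pr pji
  q : Tij.X → O → Pl.X
  qr : Tji.X → O → Pr.X
  hq : MixedMod Tij O πA Pl q
  hqr : MixedMod Tji O πA Pr qr
  q_compat : ∀ x y S, q (mij x y) S = pij x (mmj y S)
  q_compatr : ∀ y x S, qr (mji y x) S = pji y (mmi x S)
  ν : TZ.X → Pl.X
  νr : TZr.X → Pr.X
  hν : IsCLMap ν ∧ Function.Bijective ν ∧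
    ∀ x S ζ, ν (mZ (mmi x S) ζ) = pij x (Zj.lactL S ζ)
  hνr : IsCLMap νr ∧ Function.Bijective νr ∧
    ∀ y S ζ, νr (mZr (mmj y S) ζ) = pji y (Zi.lactL S ζ)
  Θ : Pl.X → Pr.X
  hΘ : IsCLMap Θ ∧ ∀ u S, Θ (q u S) = qr (θij u) S
  hR : ∀ z, νr (R z) = Θ (ν z)
/-! The induced map `∑ θ_{x,y} ↦ ∑ τ(x) τ(y)*` is bounded: for `P = ∑ τ(x) τ(y)*`,
`k = ∑ θ_{x,y}` and `k† = ∑ θ_{y,x}`, the element `P* P` is the image of `k† k`, the powers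
satisfy `‖(P* P)^(n+1)‖ ≤ C ‖k† k‖^n`, so by the C*-identity `‖P‖² = ‖P* P‖ ≤ ‖k† k‖ ≤ 4 ‖k‖²`.
Hence the sums `S_n = ∑ τ(x_n) τ(y_n)*` form a Cauchy sequence with some limit `L`, and
`L τ(z) = τ(φ(a) z) = π(a) τ(z)`. The defect `d = L - π(a)` thus kills `τ(T)`, so
`d σ(x) ω(y) = 0`; covariance of `ω` gives `d σ(x) π(A) = 0`, the C*-identity turns this into
`d σ(x) = 0`, covariance of `σ` gives `d π(A) = 0`, and finally `d d* = d L* - d π(a*) = 0`. -/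

lemma le_of_frequently_pow_succ_le_mul_pow {a r M : ℝ} (hr : 0 ≤ r)
    (h : ∃ᶠ n in atTop, a ^ (n + 1) ≤ M * r ^ n) : a ≤ r := by
  by_contra! hra
  have ha0 : 0 < a := hr.trans_lt hra
  have hlim : Tendsto (fun n => M * (r / a) ^ n) atTop (𝓝 0) := by
    simpa using (tendsto_pow_atTop_nhds_zero_of_lt_one (by positivity)
      ((div_lt_one ha0).2 hra)).const_mul M
  obtain ⟨n, hn, hsmall⟩ := (h.and_eventually (hlim.eventually (gt_mem_nhds ha0))).exists
  have : M * r ^ n < a ^ (n + 1) := by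
    calc M * r ^ n = M * (r / a) ^ n * a ^ n := by
          rw [div_pow, mul_assoc, div_mul_cancel₀ _ (pow_pos ha0 n).ne']
      _ < a * a ^ n := mul_lt_mul_of_pos_right hsmall (pow_pos ha0 n)
      _ = a ^ (n + 1) := (pow_succ' a n).symm
  linarith

lemma IsSelfAdjoint.norm_le_of_norm_pow_succ_le {C : Type*} [NormedRing C] [StarRing C]
    [CStarRing C] {b : C} (hb : IsSelfAdjoint b) {M r : ℝ} (hr : 0 ≤ r)
    (h : ∀ n, ‖b ^ (n + 1)‖ ≤ M * r ^ n) : ‖b‖ ≤ r := by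
  refine le_of_frequently_pow_succ_le_mul_pow (M := M) hr
    (frequently_atTop.2 fun N => ⟨2 ^ N - 1, ?_, ?_⟩)
  · exact Nat.le_sub_one_of_lt Nat.lt_two_pow_self
  · rw [Nat.sub_add_cancel Nat.one_le_two_pow, ← hb.norm_pow_two_pow]
    simpa [Nat.sub_add_cancel Nat.one_le_two_pow] using h (2 ^ N - 1)

lemma CStarRing.mul_star_eq_zero_of_mul_star_mul_self_eq_zero {R : Type*} [NonUnitalNormedRing R]
    [StarRing R] [CStarRing R] {f s : R} (h : f * (star s * s) = 0) : f * star s = 0 := by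
  rw [← CStarRing.mul_star_self_eq_zero_iff, star_mul, star_star, mul_assoc, ← mul_assoc (star s),
    ← mul_assoc, h, zero_mul]

lemma ContinuousLinearMap.norm_pow_apply_le {E : Type*} [NormedAddCommGroup E] [NormedSpace ℂ E]
    (K : E →L[ℂ] E) (n : ℕ) (v : E) : ‖(K ^ n) v‖ ≤ ‖K‖ ^ n * ‖v‖ := by
  induction n generalizing v with
  | zero => simp
  | succ n ih =>
    rw [pow_succ, mul_apply_eq_comp, pow_succ, mul_assoc]
    exact (ih _).trans (by gcongr; exact K.le_opNorm v)

def IsStarHom.toNonUnitalStarAlgHom {π : A → B} (h : IsStarHom π) : A →⋆ₙₐ[ℂ] B where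
  toFun := π
  map_smul' := h.map_smul
  map_zero' := by simpa using h.map_smul 0 0
  map_add' := h.map_add
  map_mul' := h.map_mul
  map_star' := h.map_star

namespace Corr

variable (W : Corr A)

lemma inner_add_left (x y z : W.X) : W.inner (x + y) z = W.inner x z + W.inner y z := by
  rw [← W.inner_star, W.inner_add_right, star_add, W.inner_star, W.inner_star]

lemma inner_smul_left (c : ℂ) (x y : W.X) : W.inner (c • x) y = star c • W.inner x y := by
  rw [← W.inner_star, W.inner_smul_right, star_smul, W.inner_star]

lemma inner_ract_left (x : W.X) (a : A) (y : W.X) :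
    W.inner (W.ract x a) y = star a * W.inner x y := by
  rw [← W.inner_star, W.inner_ract_right, star_mul, W.inner_star]

lemma inner_zero_left (y : W.X) : W.inner 0 y = 0 := by
  simpa using W.inner_smul_left 0 0 y

lemma inner_zero_right (x : W.X) : W.inner x 0 = 0 := by
  simpa using W.inner_smul_right 0 x 0

lemma inner_sum_left {ι : Type*} (s : Finset ι) (f : ι → W.X) (y : W.X) :
    W.inner (∑ i ∈ s, f i) y = ∑ i ∈ s, W.inner (f i) y :=
  map_sum (AddMonoidHom.mk' (W.inner · y) (W.inner_add_left · · y)) f s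

lemma inner_sum_right {ι : Type*} (s : Finset ι) (x : W.X) (f : ι → W.X) :
    W.inner x (∑ i ∈ s, f i) = ∑ i ∈ s, W.inner x (f i) :=
  map_sum (AddMonoidHom.mk' (W.inner x) (W.inner_add_right x)) f s

lemma inner_add_smul_self (z w : W.X) (c : ℂ) :
    W.inner (z + c • w) (z + c • w) = W.inner z z + c • W.inner z w + star c • W.inner w z +
      (star c * c) • W.inner w w := by
  simp only [inner_add_left, inner_add_right, inner_smul_left, inner_smul_right]
  module

lemma four_smul_inner (z w : W.X) :
    (4 : ℂ) • W.inner z w =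
      W.inner (z + (1 : ℂ) • w) (z + (1 : ℂ) • w) - W.inner (z + (-1 : ℂ) • w) (z + (-1 : ℂ) • w)
        - Complex.I • W.inner (z + Complex.I • w) (z + Complex.I • w)
        + Complex.I • W.inner (z + (-Complex.I) • w) (z + (-Complex.I) • w) := by
  simp only [inner_add_smul_self, star_one, star_neg, Complex.star_def, Complex.conj_I]
  match_scalars <;> ring_nf <;> simp only [Complex.I_sq] <;> ring

-- Polarization, since `Corr` does not assume `⟨x, x⟩ ≥ 0` (needed for the usual Cauchy–Schwarz).
lemma norm_inner_le_add_sq (z w : W.X) : ‖W.inner z w‖ ≤ (‖z‖ + ‖w‖) ^ 2 := by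
  have hsquare : ∀ c : ℂ, ‖c‖ = 1 → ‖W.inner (z + c • w) (z + c • w)‖ ≤ (‖z‖ + ‖w‖) ^ 2 := by
    intro c hc
    rw [← W.norm_eq]
    gcongr
    calc ‖z + c • w‖ ≤ ‖z‖ + ‖c • w‖ := norm_add_le _ _
      _ = ‖z‖ + ‖w‖ := by rw [norm_smul, hc, one_mul]
  obtain ⟨p₁, p₂, p₃, p₄, hp, h₁, h₂, h₃, h₄⟩ : ∃ p₁ p₂ p₃ p₄ : A,
      (4 : ℂ) • W.inner z w = p₁ - p₂ - Complex.I • p₃ + Complex.I • p₄ ∧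
        ‖p₁‖ ≤ (‖z‖ + ‖w‖) ^ 2 ∧ ‖p₂‖ ≤ (‖z‖ + ‖w‖) ^ 2 ∧
        ‖p₃‖ ≤ (‖z‖ + ‖w‖) ^ 2 ∧ ‖p₄‖ ≤ (‖z‖ + ‖w‖) ^ 2 :=
    ⟨_, _, _, _, W.four_smul_inner z w, hsquare 1 (by simp), hsquare (-1) (by simp),
      hsquare Complex.I (by simp), hsquare (-Complex.I) (by simp)⟩
  have h4 := congrArg norm hp
  have := norm_add_le (p₁ - p₂ - Complex.I • p₃) (Complex.I • p₄)
  have := norm_sub_le (p₁ - p₂) (Complex.I • p₃)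
  have := norm_sub_le p₁ p₂
  simp only [norm_smul, Complex.norm_I, Complex.norm_ofNat, one_mul] at *
  linarith

lemma norm_inner_le (z w : W.X) : ‖W.inner z w‖ ≤ 4 * (‖z‖ * ‖w‖) := by
  rcases eq_or_ne z 0 with rfl | hz
  · simp [inner_zero_left]
  rcases eq_or_ne w 0 with rfl | hw
  · simp [inner_zero_right]
  have hz' : 0 < ‖z‖ := norm_pos_iff.2 hz
  have hw' : 0 < ‖w‖ := norm_pos_iff.2 hw
  have key := W.norm_inner_le_add_sq ((‖z‖⁻¹ : ℂ) • z) ((‖w‖⁻¹ : ℂ) • w)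
  simp only [inner_smul_left, inner_smul_right, smul_smul, norm_smul, norm_mul, norm_star,
    norm_inv, Complex.norm_real, norm_norm, inv_mul_cancel₀ hz'.ne', inv_mul_cancel₀ hw'.ne'] at key
  rw [← mul_inv, inv_mul_le_iff₀ (by positivity)] at key
  linarith

lemma rankOne_smul_left (c : ℂ) (x y : W.X) : W.rankOne (c • x) y = c • W.rankOne x y := by
  ext z
  rw [W.rankOne_apply, smul_apply, W.rankOne_apply, W.ract_smul]

lemma rankOne_neg_left (x y : W.X) : W.rankOne (-x) y = -W.rankOne x y := by
  simpa using W.rankOne_smul_left (-1) x y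

lemma rankOne_ract_inner (y x x' y' : W.X) :
    W.rankOne (W.ract y (W.inner x x')) y' = W.rankOne y x * W.rankOne x' y' := by
  ext z
  rw [mul_apply_eq_comp, W.rankOne_apply, W.rankOne_apply, W.rankOne_apply,
    W.inner_ract_right, W.ract_mul]

lemma inner_sum_rankOne_swap {ι : Type*} [Fintype ι] (x y : ι → W.X) (w z : W.X) :
    W.inner ((∑ r, W.rankOne (y r) (x r)) w) z = W.inner w ((∑ r, W.rankOne (x r) (y r)) z) := by
  rw [sum_apply, sum_apply, W.inner_sum_left, W.inner_sum_right]
  refine Finset.sum_congr rfl fun r _ => ?_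
  rw [W.rankOne_apply, W.rankOne_apply, W.inner_ract_left, W.inner_ract_right, W.inner_star]

lemma norm_le_of_inner_apply_eq {h k : W.X →L[ℂ] W.X}
    (hk : ∀ w z, W.inner (h w) z = W.inner (k w) (k z)) : ‖h‖ ≤ 4 * ‖k‖ ^ 2 := by
  refine h.opNorm_le_bound (by positivity) fun w => ?_
  have hsq : ‖h w‖ * ‖h w‖ ≤ (4 * ‖k‖ ^ 2 * ‖w‖) * ‖h w‖ :=
    calc ‖h w‖ * ‖h w‖ = ‖W.inner (k w) (k (h w))‖ := by rw [← hk, ← sq, W.norm_eq]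
      _ ≤ 4 * (‖k w‖ * ‖k (h w)‖) := W.norm_inner_le _ _
      _ ≤ 4 * ((‖k‖ * ‖w‖) * (‖k‖ * ‖h w‖)) := by gcongr <;> exact k.le_opNorm _
      _ = (4 * ‖k‖ ^ 2 * ‖w‖) * ‖h w‖ := by ring
  rcases (norm_nonneg (h w)).eq_or_lt with h0 | hpos
  · rw [← h0]
    positivity
  · exact le_of_mul_le_mul_right hsq hpos

lemma exists_eq_sum_rankOne_of_mem_span {K : W.X →L[ℂ] W.X}
    (hK : K ∈ Submodule.span ℂ {T : W.X →L[ℂ] W.X | ∃ x y, T = W.rankOne x y}) :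
    ∃ (n : ℕ) (x y : Fin n → W.X), K = ∑ r, W.rankOne (x r) (y r) := by
  induction hK using Submodule.span_induction with
  | mem T hT =>
    obtain ⟨x, y, rfl⟩ := hT
    exact ⟨1, fun _ => x, fun _ => y, by simp⟩
  | zero => exact ⟨0, Fin.elim0, Fin.elim0, by simp⟩
  | add K K' _ _ ih ih' =>
    obtain ⟨n, x, y, rfl⟩ := ih
    obtain ⟨n', x', y', rfl⟩ := ih'
    exact ⟨n + n', Fin.append x x', Fin.append y y', by simp [Fin.sum_univ_add]⟩
  | smul c K _ ih =>
    obtain ⟨n, x, y, rfl⟩ := ih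
    exact ⟨n, fun r => c • x r, y, by simp [Finset.smul_sum, rankOne_smul_left]⟩

lemma Regular.exists_tendsto_sum_rankOne {W : Corr A} (hW : W.Regular) (a : A) :
    ∃ (N : ℕ → ℕ) (x y : ∀ n, Fin (N n) → W.X),
      Tendsto (fun n => ∑ r, W.rankOne (x n r) (y n r)) atTop (𝓝 (W.lactL a)) := by
  obtain ⟨K, hK, hlim⟩ := mem_closure_iff_seq_limit.1 (hW.2 a)
  choose N x y hxy using fun n => W.exists_eq_sum_rankOne_of_mem_span (hK n)
  exact ⟨N, x, y, by simpa only [← hxy] using hlim⟩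

end Corr

namespace IsRep

section

variable {W : Corr A} {π : A → B} {t : W.X → B}

lemma norm_le (h : IsRep W π t) (x : W.X) : ‖t x‖ ≤ ‖x‖ := by
  refine (pow_le_pow_iff_left₀ (norm_nonneg _) (norm_nonneg _) two_ne_zero).1 ?_
  rw [sq, ← CStarRing.norm_star_mul_self, h.inner, W.norm_eq]
  exact NonUnitalStarAlgHom.norm_apply_le h.hom.toNonUnitalStarAlgHom _

lemma t_neg (h : IsRep W π t) (x : W.X) : t (-x) = -t x := by
  simpa using h.t_smul (-1) x

lemma t_sum (h : IsRep W π t) {ι : Type*} (s : Finset ι) (f : ι → W.X) :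
    t (∑ i ∈ s, f i) = ∑ i ∈ s, t (f i) :=
  map_sum (AddMonoidHom.mk' t h.t_add) f s

lemma continuous (h : IsRep W π t) : Continuous t :=
  AddMonoidHomClass.continuous_of_bound (AddMonoidHom.mk' t h.t_add) 1
    (by simpa using h.norm_le)

lemma comp_starHom (h : IsRep W π t) {C : Type u} [NonUnitalCStarAlgebra C]
    (ψ : B →⋆ₙₐ[ℂ] C) : IsRep W (ψ ∘ π) (ψ ∘ t) where
  hom := ⟨by simp [h.hom.map_add], by simp [h.hom.map_mul],
    fun a => by simp [h.hom.map_star, map_star], by simp [h.hom.map_smul]⟩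
  t_add := by simp [h.t_add]
  t_smul := by simp [h.t_smul]
  lact := by simp [h.lact]
  ract := by simp [h.ract]
  inner x y := by simp only [Function.comp_apply, ← map_star, ← map_mul, h.inner]

lemma sum_mul_apply (h : IsRep W π t) {ι : Type*} [Fintype ι] (x y : ι → W.X) (z : W.X) :
    (∑ r, t (x r) * star (t (y r))) * t z = t ((∑ r, W.rankOne (x r) (y r)) z) := by
  rw [Finset.sum_mul, sum_apply, h.t_sum]
  refine Finset.sum_congr rfl fun r _ => ?_
  rw [mul_assoc, h.inner, ← h.ract, W.rankOne_apply]

lemma star_sum_mul_sum (h : IsRep W π t) {ι : Type*} [Fintype ι] (x y : ι → W.X) :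
    star (∑ r, t (x r) * star (t (y r))) * ∑ r, t (x r) * star (t (y r)) =
      ∑ j : ι × ι, t (W.ract (y j.1) (W.inner (x j.1) (x j.2))) * star (t (y j.2)) := by
  rw [star_sum, Finset.sum_mul_sum, Fintype.sum_prod_type]
  refine Finset.sum_congr rfl fun r _ => Finset.sum_congr rfl fun s _ => ?_
  rw [star_mul, star_star, h.ract, ← h.inner]
  simp only [mul_assoc]

lemma mul_eq_zero_of_mul_mul_pi_inner_eq_zero (h : IsRep W π t) {d : B} {x : W.X}
    (hd : d * t x * π (W.inner x x) = 0) : d * t x = 0 := by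
  rw [← h.inner] at hd
  have hd' : d * (star (star (t x)) * star (t x)) = 0 := by
    rw [star_star, ← mul_assoc]
    exact CStarRing.mul_star_eq_zero_of_mul_star_mul_self_eq_zero hd
  simpa using CStarRing.mul_star_eq_zero_of_mul_star_mul_self_eq_zero hd'

end

section Unital

variable {W : Corr A} {C : Type u} [CStarAlgebra C] {π : A → C} {t : W.X → C}
  {ι : Type*} [Fintype ι]

lemma sum_pow_mul_apply (h : IsRep W π t) (x y : ι → W.X) (n : ℕ) (z : W.X) :
    (∑ r, t (x r) * star (t (y r))) ^ n * t z = t (((∑ r, W.rankOne (x r) (y r)) ^ n) z) := by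
  induction n generalizing z with
  | zero => simp
  | succ n ih => rw [pow_succ, mul_assoc, h.sum_mul_apply, ih, pow_succ, mul_apply_eq_comp]

lemma norm_sum_pow_succ_le (h : IsRep W π t) (x y : ι → W.X) (n : ℕ) :
    ‖(∑ r, t (x r) * star (t (y r))) ^ (n + 1)‖ ≤
      (∑ r, ‖x r‖ * ‖y r‖) * ‖∑ r, W.rankOne (x r) (y r)‖ ^ n := by
  rw [pow_succ, Finset.mul_sum, Finset.sum_mul]
  refine (norm_sum_le _ _).trans (Finset.sum_le_sum fun r _ => ?_)
  rw [← mul_assoc, h.sum_pow_mul_apply]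
  refine (norm_mul_le _ _).trans ?_
  rw [norm_star]
  calc _ ≤ (‖∑ r, W.rankOne (x r) (y r)‖ ^ n * ‖x r‖) * ‖y r‖ := by
        gcongr
        · exact (h.norm_le _).trans (ContinuousLinearMap.norm_pow_apply_le _ n _)
        · exact h.norm_le _
    _ = _ := by ring

end Unital

variable {W : Corr A} {π : A → B} {t : W.X → B} {ι : Type*} [Fintype ι]

lemma norm_sum_le_of_isSelfAdjoint (h : IsRep W π t) (x y : ι → W.X)
    (hsa : IsSelfAdjoint (∑ r, t (x r) * star (t (y r)))) :
    ‖∑ r, t (x r) * star (t (y r))‖ ≤ ‖∑ r, W.rankOne (x r) (y r)‖ := by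
  set ψ := Unitization.inrNonUnitalStarAlgHom ℂ B
  have hψ : ψ (∑ r, t (x r) * star (t (y r))) = ∑ r, (ψ ∘ t) (x r) * star ((ψ ∘ t) (y r)) := by
    simp [map_sum, map_mul, map_star]
  rw [← Unitization.norm_inr (𝕜 := ℂ)]
  change ‖ψ _‖ ≤ _
  rw [hψ]
  exact (hψ ▸ hsa.map ψ).norm_le_of_norm_pow_succ_le (norm_nonneg _)
    ((h.comp_starHom ψ).norm_sum_pow_succ_le x y)

lemma norm_sum_le (h : IsRep W π t) (x y : ι → W.X) :
    ‖∑ r, t (x r) * star (t (y r))‖ ≤ 2 * ‖∑ r, W.rankOne (x r) (y r)‖ := by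
  set P := ∑ r, t (x r) * star (t (y r))
  set K := ∑ r, W.rankOne (x r) (y r)
  have hK : ∑ j : ι × ι, W.rankOne (W.ract (y j.1) (W.inner (x j.1) (x j.2))) (y j.2) =
      (∑ r, W.rankOne (y r) (x r)) * K := by
    simp only [Fintype.sum_prod_type, W.rankOne_ract_inner, Finset.sum_mul_sum, K]
  have hnorm : ‖(∑ r, W.rankOne (y r) (x r)) * K‖ ≤ 4 * ‖K‖ ^ 2 :=
    W.norm_le_of_inner_apply_eq fun w z => by
      rw [mul_apply_eq_comp, W.inner_sum_rankOne_swap]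
  have hP : ‖P‖ ^ 2 ≤ (2 * ‖K‖) ^ 2 :=
    calc ‖P‖ ^ 2
        = ‖∑ j : ι × ι, t (W.ract (y j.1) (W.inner (x j.1) (x j.2))) * star (t (y j.2))‖ := by
          rw [sq, ← CStarRing.norm_star_mul_self, h.star_sum_mul_sum]
      _ ≤ ‖∑ j : ι × ι, W.rankOne (W.ract (y j.1) (W.inner (x j.1) (x j.2))) (y j.2)‖ :=
          h.norm_sum_le_of_isSelfAdjoint _ _ (h.star_sum_mul_sum x y ▸ .star_mul_self P)
      _ ≤ 4 * ‖K‖ ^ 2 := hK ▸ hnorm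
      _ = (2 * ‖K‖) ^ 2 := by ring
  exact (pow_le_pow_iff_left₀ (norm_nonneg _) (by positivity) two_ne_zero).1 hP

lemma norm_sum_sub_sum_le (h : IsRep W π t) {κ : Type*} [Fintype κ] (x y : ι → W.X)
    (x' y' : κ → W.X) :
    ‖∑ r, t (x r) * star (t (y r)) - ∑ r, t (x' r) * star (t (y' r))‖ ≤
      2 * ‖∑ r, W.rankOne (x r) (y r) - ∑ r, W.rankOne (x' r) (y' r)‖ := by
  have := h.norm_sum_le (Sum.elim x fun r => -x' r) (Sum.elim y y')
  simpa [Fintype.sum_sum_type, h.t_neg, W.rankOne_neg_left, sub_eq_add_neg] using this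

lemma exists_tendsto_sum (h : IsRep W π t) {N : ℕ → ℕ} {x y : ∀ n, Fin (N n) → W.X}
    {K : W.X →L[ℂ] W.X} (hK : Tendsto (fun n => ∑ r, W.rankOne (x n r) (y n r)) atTop (𝓝 K)) :
    ∃ L, Tendsto (fun n => ∑ r, t (x n r) * star (t (y n r))) atTop (𝓝 L) ∧
      ∀ z, L * t z = t (K z) := by
  have hcauchy : CauchySeq fun n => ∑ r, t (x n r) * star (t (y n r)) := by
    refine Metric.cauchySeq_iff.2 fun ε hε => ?_
    obtain ⟨M, hM⟩ := Metric.cauchySeq_iff.1 hK.cauchySeq (ε / 2) (half_pos hε)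
    refine ⟨M, fun p hp q hq => ?_⟩
    have := hM p hp q hq
    rw [dist_eq_norm] at this ⊢
    linarith [h.norm_sum_sub_sum_le (x p) (y p) (x q) (y q)]
  obtain ⟨L, hL⟩ := cauchySeq_tendsto_of_complete hcauchy
  refine ⟨L, hL, fun z => tendsto_nhds_unique (hL.mul_const (t z)) ?_⟩
  simp only [h.sum_mul_apply]
  exact (h.continuous.tendsto _).comp
    ((ContinuousLinearMap.apply ℂ W.X z).continuous.continuousAt.tendsto.comp hK)

end IsRep

lemma CPCov.mul_pi_eq_zero {W : Corr A} {π : A → B} {t : W.X → B} (hc : CPCov W π t)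
    (hW : W.Regular) {f : B} (hf : ∀ x, f * t x = 0) (a : A) : f * π a = 0 := by
  obtain ⟨N, x, y, hxy⟩ := hW.exists_tendsto_sum_rankOne a
  refine tendsto_nhds_unique ((hc a N x y hxy).const_mul f) ?_
  simp only [Finset.mul_sum, ← mul_assoc, hf, zero_mul, Finset.sum_const_zero]
  exact tendsto_const_nhds

theorem product_of_covariant_reps_is_covariant_general
    {A B : Type u} [NonUnitalCStarAlgebra A] [NonUnitalCStarAlgebra B]
    (W V : Corr A) (hW : W.Reg) (hV : V.Reg)
    (T : Corr A) (m : W.X → V.X → T.X)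
    (π : A → B) (σ : W.X → B) (ω : V.X → B)
    (hσ : IsRep W π σ)
    (hσc : CPCov W π σ) (hωc : CPCov V π ω)
    (τ : T.X → B) (hτ : IsRep T π τ)
    (hτm : ∀ x y, τ (m x y) = σ x * ω y) :
    CPCov T π τ := by
  intro a N x y hxy
  obtain ⟨L, hL, hLτ⟩ := hτ.exists_tendsto_sum hxy
  set d := L - π a
  have hdτ : ∀ z, d * τ z = 0 := fun z => by rw [sub_mul, hLτ, hτ.lact, sub_self]
  have hdσ : ∀ x, d * σ x = 0 := fun x =>
    hσ.mul_eq_zero_of_mul_mul_pi_inner_eq_zero <| hωc.mul_pi_eq_zero hV.2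
      (fun y => by rw [mul_assoc, ← hτm, hdτ]) _
  have hdπ : ∀ c, d * π c = 0 := hσc.mul_pi_eq_zero hW.2 hdσ
  have hdL : d * star L = 0 := by
    refine tendsto_nhds_unique (hL.star.const_mul d) ?_
    simp only [star_sum, star_mul, star_star, Finset.mul_sum, ← mul_assoc, hdτ, zero_mul,
      Finset.sum_const_zero]
    exact tendsto_const_nhds
  have hdd : d * star d = 0 := by
    rw [star_sub, mul_sub, hdL, ← hσ.hom.map_star, hdπ, sub_zero]
  have hLa : L = π a := sub_eq_zero.1 ((CStarRing.mul_star_self_eq_zero_iff d).1 hdd)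
  exact hLa ▸ hL

/-- Lemma `subcat`.  If `(π,σ)` and `(π,ω)` are
Cuntz–Pimsner covariant representations of the nondegenerate regular
correspondences `X` and `Y` in `B` with the same `π`, then the product
representation `(π, σω)` of `X ⊗_A Y`, determined on elementary tensors by
`(σω)(x ⊗ y) = σ(x) ω(y)`, is Cuntz–Pimsner covariant.  (Hence the full
subcategory `𝒢ᴮ_c` of covariantly represented correspondences is closed
under the monoidal product of `𝒢ᴮ`, i.e. it is a monoidal subcategory.) -/
theorem product_of_covariant_reps_is_covariant
    {A B : Type u} [NonUnitalCStarAlgebra A] [NonUnitalCStarAlgebra B]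
    (W V : Corr A) (hW : W.Reg) (hV : V.Reg)
    (T : Corr A) (m : W.X → V.X → T.X) (hT : IsTensor W V T m)
    (π : A → B) (σ : W.X → B) (ω : V.X → B)
    (hσ : IsRep W π σ) (hω : IsRep V π ω)
    (hσc : CPCov W π σ) (hωc : CPCov V π ω)
    (τ : T.X → B) (hτ : IsRep T π τ)
    (hτm : ∀ x y, τ (m x y) = σ x * ω y) :
    CPCov T π τ :=
  product_of_covariant_reps_is_covariant_general W V hW hV T m π σ ω hσ hσc hωc τ hτ hτm
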